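/- arXiv:1711.06783 — 2 statements merged into one kernel-verified Lean document; each statement's English description precedes it below -/
import Mathlib

section
/- Let S be a finite set and τ a permutation of S, and for each ℓ ≥ 1 let t_ℓ be the number of cycles of length ℓ in the cycle decomposition of τ. Then Σ_ℓ ℓ·t_ℓ = |S|, and for every 2×2 matrix w of positive reals and every real z > 0, A_{S,τ}(w, z) = Π_{ℓ ≥ 1} a_ℓ(w, z)^{t_ℓ}. -/
open Finset

/-- Unordered pairs of distinct vertices of `[n]`. -/
abbrev VPairs (n : ℕ) := {e : Sym2 (Fin n) // ¬ e.IsDiag}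

/-- A graph on `[n]`, identified with its edge-indicator function. -/
abbrev PairGraph (n : ℕ) := VPairs n → Bool

/-- The permutation of vertex pairs induced by a permutation of vertices. -/
def pairPerm {n : ℕ} (π : Equiv.Perm (Fin n)) : Equiv.Perm (VPairs n) where
  toFun e := ⟨e.val.map π, fun h => e.prop ((Sym2.isDiag_map π.injective).mp h)⟩
  invFun e := ⟨e.val.map π.symm, fun h => e.prop ((Sym2.isDiag_map π.symm.injective).mp h)⟩
  left_inv e := by
    ext1
    simp [Sym2.map_map]
  right_inv e := by
    ext1
    simp [Sym2.map_map]

/-- Hamming distance between two labelings. -/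
def hamming {S : Type*} [Fintype S] [DecidableEq S] (f g : S → Bool) : ℕ :=
  (Finset.univ.filter fun e => f e ≠ g e).card

/-- `δ(τ; f, g) = (Δ(f∘τ, g) − Δ(f, g))/2`, as a rational number. -/
def deltaQ {S : Type*} [Fintype S] [DecidableEq S] (τ : Equiv.Perm S) (f g : S → Bool) : ℚ :=
  (((hamming (f ∘ τ) g : ℚ)) - (hamming f g : ℚ)) / 2

/-- The entry `(i,j)` of the type `μ(f,g)`. -/
def typeCount {S : Type*} [Fintype S] [DecidableEq S] (f g : S → Bool) (i j : Bool) : ℕ :=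
  (Finset.univ.filter fun e => f e = i ∧ g e = j).card

/-- The joint edge distribution determined by a probability vector. -/
def pv (p11 p10 p01 p00 : ℝ) : Bool → Bool → ℝ :=
  fun a b => if a then (if b then p11 else p10) else (if b then p01 else p00)

open Classical in
/-- The probability of an event under the correlated Erdős–Rényi model `ER(n,p)`. -/
noncomputable def ERprob (n : ℕ) (p : Bool → Bool → ℝ)
    (E : PairGraph n × PairGraph n → Prop) : ℝ :=
  ∑ gab : PairGraph n × PairGraph n,
    (if E gab then (1 : ℝ) else 0) * ∏ e : VPairs n, p (gab.1 e) (gab.2 e)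

open Classical in
/-- The probability of an event under the joint distribution of a uniformly random
permutation `Π` of `[n]` together with `(G_a, G_b) ~ ER(n,p)` independent of it. -/
noncomputable def ERPermProb (n : ℕ) (p : Bool → Bool → ℝ)
    (E : Equiv.Perm (Fin n) → PairGraph n × PairGraph n → Prop) : ℝ :=
  (∑ π : Equiv.Perm (Fin n), ∑ gab : PairGraph n × PairGraph n,
    (if E π gab then (1 : ℝ) else 0) * ∏ e : VPairs n, p (gab.1 e) (gab.2 e))
    / (Nat.factorial n)

/-- The anonymized graph `G_c`, determined by `G_c(l(Π)(e)) = G_a(e)`. -/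
def anonymize {n : ℕ} (π : Equiv.Perm (Fin n)) (ga : PairGraph n) : PairGraph n :=
  fun e => ga ((pairPerm π).symm e)

/-- `S_{n,nt}`: the permutations of `[n]` with exactly `nt` non-fixed points. -/
def Snn (n nt : ℕ) : Finset (Equiv.Perm (Fin n)) :=
  Finset.univ.filter fun π => (Finset.univ.filter fun x => π x ≠ x).card = nt

open Classical in
/-- The generating function `A_{S,τ}(w,z)`; here `z^δ` is expressed as `√z^(2δ)`. -/
noncomputable def AgF {S : Type*} [Fintype S] (τ : Equiv.Perm S)
    (w : Bool → Bool → ℝ) (z : ℝ) : ℝ :=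
  ∑ g : S → Bool, ∑ h : S → Bool,
    (Real.sqrt z) ^ ((hamming (g ∘ τ) h : ℤ) - (hamming g h : ℤ)) *
      ∏ i : Bool, ∏ j : Bool, w i j ^ typeCount g h i j

/-- `a_ℓ(w,z)`: the generating function of a single cycle of length `ℓ`. -/
noncomputable def aGF (ℓ : ℕ) (w : Bool → Bool → ℝ) (z : ℝ) : ℝ :=
  AgF (finRotate ℓ) w z

open Classical in
/-- The number of cycles of length `ℓ` in the cycle decomposition of `τ`
(the number of points whose `τ`-orbit has size `ℓ`, divided by `ℓ`). -/
noncomputable def cycleCount {S : Type*} [Fintype S] (τ : Equiv.Perm S) (ℓ : ℕ) : ℕ :=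
  (Finset.univ.filter fun x : S =>
    (Finset.univ.filter fun y : S => τ.SameCycle x y).card = ℓ).card / ℓ

open Classical in
/-- The probability of an event under an Erdős–Rényi graph `G(n,p)`. -/
noncomputable def ERgraphProb (n : ℕ) (p : ℝ) (E : PairGraph n → Prop) : ℝ :=
  ∑ g : PairGraph n,
    (if E g then (1 : ℝ) else 0) * ∏ e : VPairs n, (if g e then p else 1 - p)

open Classical in
/-- The number of automorphisms of a graph. -/
noncomputable def autCard {n : ℕ} (g : PairGraph n) : ℕ :=
  (Finset.univ.filter fun π : Equiv.Perm (Fin n) =>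
    ∀ e : VPairs n, g (pairPerm π e) = g e).card

/-! Summing out `h` site by site turns `A_{S,τ}(w, z)` into a transfer sum
`∑_g ∏_x K(g(τ x), g x)` over labelings `g` alone. Such a sum is unchanged under relabelling
`S` and is multiplicative over `τ`-invariant splittings of `S`, and the restriction of `τ` to one
of its cycles is a relabelling of `finRotate` of the cycle's length. Peeling off one cycle at a
time therefore factors `A_{S,τ}` into the cycle factors `a_ℓ`, and the same induction counts the
points of `S` as `∑ ℓ t_ℓ`. -/

theorem Fin.val_finRotate_modEq {n : ℕ} (i : Fin n) : (finRotate n i : ℕ) ≡ i + 1 [MOD n] := by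
  have := i.neZero
  rw [finRotate_apply, Fin.val_add, Fin.val_one']
  exact (Nat.mod_modEq _ _).trans (Nat.ModEq.add_left _ (Nat.mod_modEq _ _))

namespace Equiv.Perm

variable {S T α R : Type*} [Fintype S] [Fintype T] [Fintype α] [CommSemiring R]

open Classical in
noncomputable def transferSum (τ : Perm S) (K : α → α → R) : R :=
  ∑ g : S → α, ∏ x, K (g (τ x)) (g x)

theorem transferSum_permCongr (e : S ≃ T) (τ : Perm S) (K : α → α → R) :
    (e.permCongr τ).transferSum K = τ.transferSum K := by
  classical
  refine (Fintype.sum_equiv (e.arrowCongr (Equiv.refl α)) _ _ fun g => ?_).symm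
  exact Fintype.prod_equiv e _ _ fun x => by simp [arrowCongr_apply]

theorem transferSum_sumCongr (σ : Perm S) (τ : Perm T) (K : α → α → R) :
    (σ.sumCongr τ).transferSum K = σ.transferSum K * τ.transferSum K := by
  classical
  simp only [transferSum, sum_mul_sum, ← Fintype.sum_prod_type' (γ := R)]
  convert Fintype.sum_equiv (sumArrowEquivProdArrow S T α) _ _ fun g => ?_
  simp [Fintype.prod_sum_type]

theorem transferSum_subtypeCongr {p : S → Prop} [DecidablePred p]
    (σ : Perm {x // p x}) (τ : Perm {x // ¬ p x}) (K : α → α → R) :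
    (σ.subtypeCongr τ).transferSum K = σ.transferSum K * τ.transferSum K := by
  rw [Perm.subtypeCongr, transferSum_permCongr, transferSum_sumCongr]

theorem exists_permCongr_eq_finRotate {σ : Perm α} (a : α) (hσ : ∀ b, σ.SameCycle a b) :
    ∃ e : α ≃ Fin (Fintype.card α), e.permCongr σ = finRotate _ := by
  classical
  have hcyc : σ.IsCycleOn (univ : Finset α) :=
    ⟨by simp [Set.bijOn_univ], fun b _ c _ => (hσ b).symm.trans (hσ c)⟩
  have hpow (m n : ℕ) : (σ ^ m) a = (σ ^ n) a ↔ m ≡ n [MOD Fintype.card α] :=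
    hcyc.pow_apply_eq_pow_apply (mem_univ a)
  set f : Fin (Fintype.card α) → α := fun i => (σ ^ (i : ℕ)) a
  have hf : f.Bijective := by
    refine (Fintype.bijective_iff_injective_and_card f).2 ⟨fun i j hij => ?_, Fintype.card_fin _⟩
    exact Fin.ext (Nat.ModEq.eq_of_lt_of_lt ((hpow _ _).1 hij) i.2 j.2)
  have hrot (i) : f (finRotate _ i) = σ (f i) := by
    rw [← mul_apply, ← pow_succ', hpow]
    exact Fin.val_finRotate_modEq i
  refine ⟨(Equiv.ofBijective f hf).symm, Equiv.ext fun i => ?_⟩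
  rw [permCongr_apply, symm_symm, Equiv.symm_apply_eq, ofBijective_apply, ofBijective_apply, hrot]

section Cycles

open Classical

variable (τ : Perm S) (x : S)

def restrictToCycle : Perm {y // τ.SameCycle x y} :=
  τ.subtypePerm fun _ => sameCycle_apply_right

def restrictOffCycle : Perm {y // ¬ τ.SameCycle x y} :=
  τ.subtypePerm fun _ => sameCycle_apply_right.not

theorem subtypeCongr_restrictToCycle_restrictOffCycle :
    (τ.restrictToCycle x).subtypeCongr (τ.restrictOffCycle x) = τ := by
  ext y
  by_cases h : τ.SameCycle x y <;> simp [h, restrictToCycle, restrictOffCycle]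

noncomputable def orbitCard : ℕ := #{y | τ.SameCycle x y}

theorem cycleCount_eq_card_div (ℓ : ℕ) : cycleCount τ ℓ = #{y | τ.orbitCard y = ℓ} / ℓ := rfl

theorem card_sameCycle [Fintype {y // τ.SameCycle x y}] :
    Fintype.card {y // τ.SameCycle x y} = τ.orbitCard x :=
  (Fintype.card_congr' rfl).trans (Fintype.card_subtype _)

theorem orbitCard_pos : 0 < τ.orbitCard x :=
  card_pos.2 ⟨x, mem_filter.2 ⟨mem_univ x, .refl τ x⟩⟩

theorem orbitCard_le_card : τ.orbitCard x ≤ Fintype.card S :=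
  card_le_univ _

variable {τ x} in
theorem SameCycle.orbitCard_eq {y : S} (h : τ.SameCycle x y) : τ.orbitCard x = τ.orbitCard y := by
  rw [orbitCard, orbitCard, filter_congr fun z _ => ⟨h.symm.trans, h.trans⟩]

theorem card_restrictOffCycle_add_orbitCard :
    Fintype.card {y // ¬ τ.SameCycle x y} + τ.orbitCard x = Fintype.card S := by
  rw [Fintype.card_subtype_compl, card_sameCycle]
  exact Nat.sub_add_cancel (τ.orbitCard_le_card x)

theorem orbitCard_restrictOffCycle (y : {y // ¬ τ.SameCycle x y}) :
    (τ.restrictOffCycle x).orbitCard y = τ.orbitCard y := by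
  rw [← card_sameCycle, ← card_sameCycle]
  refine Fintype.card_congr ((subtypeEquivRight fun z => sameCycle_subtypePerm).trans
    ((subtypeSubtypeEquivSubtypeInter _ (τ.SameCycle y)).trans (subtypeEquivRight fun z => ?_)))
  exact and_iff_right_of_imp fun hyz hxz => y.2 (hxz.trans hyz.symm)

theorem transferSum_restrictToCycle (K : α → α → R) :
    (τ.restrictToCycle x).transferSum K = (finRotate (τ.orbitCard x)).transferSum K := by
  obtain ⟨e, he⟩ := exists_permCongr_eq_finRotate (σ := τ.restrictToCycle x) ⟨x, .refl τ x⟩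
    fun b => sameCycle_subtypePerm.2 b.2
  rw [← card_sameCycle, ← he, transferSum_permCongr]

theorem card_orbitCard_eq (ℓ : ℕ) :
    #{y | τ.orbitCard y = ℓ} = #{y | (τ.restrictOffCycle x).orbitCard y = ℓ} +
      if τ.orbitCard x = ℓ then τ.orbitCard x else 0 := by
  rw [← card_filter_add_card_filter_not (τ.SameCycle x), add_comm, filter_filter,
    filter_filter]
  congr 1
  · simp_rw [orbitCard_restrictOffCycle, ← Fintype.card_subtype]
    exact Fintype.card_congr ((subtypeEquivRight fun _ => and_comm).trans
      (subtypeSubtypeEquivSubtypeInter _ _).symm)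
  · split_ifs with hℓ
    · subst hℓ
      exact congrArg card
        (filter_congr fun y _ => and_iff_right_of_imp fun h => h.orbitCard_eq.symm)
    · exact card_eq_zero.2 (filter_eq_empty_iff.2 fun y _ h => hℓ (h.2.orbitCard_eq.trans h.1))

theorem cycleCount_eq_cycleCount_restrictOffCycle_add (ℓ : ℕ) :
    cycleCount τ ℓ = cycleCount (τ.restrictOffCycle x) ℓ + if τ.orbitCard x = ℓ then 1 else 0 := by
  rw [cycleCount_eq_card_div, cycleCount_eq_card_div, card_orbitCard_eq τ x]
  split_ifs with h
  · rw [← h, Nat.add_div_right _ (τ.orbitCard_pos x)]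
  · rfl

universe u in
theorem induction_on_cycles {P : ∀ (S : Type u) [Fintype S], Perm S → Prop}
    (empty : ∀ (S : Type u) [Fintype S] [IsEmpty S] (τ : Perm S), P S τ)
    (peel : ∀ (S : Type u) [Fintype S] (τ : Perm S) (x : S), P _ (τ.restrictOffCycle x) → P S τ)
    {S : Type u} [Fintype S] (τ : Perm S) : P S τ := by
  induction h : Fintype.card S using Nat.strong_induction_on generalizing S with
  | _ n ih =>
  cases isEmpty_or_nonempty S with
  | inl _ => exact empty S τ
  | inr hS =>
    obtain ⟨x⟩ := hS
    exact peel S τ x (ih _ (h ▸ Fintype.card_subtype_lt (not_not.2 (.refl τ x))) _ rfl)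

/- The range bound `N` is left free so that the induction hypothesis, for the smaller
complement of a cycle, is available over the same range. -/
theorem sum_range_mul_cycleCount {N : ℕ} (hN : Fintype.card S ≤ N) :
    ∑ ℓ ∈ range (N + 1), ℓ * cycleCount τ ℓ = Fintype.card S := by
  refine induction_on_cycles
    (P := fun S _ τ => ∀ N, Fintype.card S ≤ N →
      ∑ ℓ ∈ range (N + 1), ℓ * cycleCount τ ℓ = Fintype.card S)
    (fun S _ _ τ N _ => by simp [cycleCount]) (fun S _ τ x ih N hN => ?_) τ N hN
  have hcard := τ.card_restrictOffCycle_add_orbitCard x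
  simp_rw [cycleCount_eq_cycleCount_restrictOffCycle_add τ x, mul_add, mul_ite, mul_one, mul_zero,
    sum_add_distrib, sum_ite_eq, ih N (by omega)]
  rw [if_pos (mem_range.2 (by omega)), hcard]

theorem transferSum_eq_prod_cycleCount (K : α → α → R) {N : ℕ} (hN : Fintype.card S ≤ N) :
    τ.transferSum K = ∏ ℓ ∈ range (N + 1), (finRotate ℓ).transferSum K ^ cycleCount τ ℓ := by
  refine induction_on_cycles
    (P := fun S _ τ => ∀ N, Fintype.card S ≤ N →
      τ.transferSum K = ∏ ℓ ∈ range (N + 1), (finRotate ℓ).transferSum K ^ cycleCount τ ℓ)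
    (fun S _ _ τ N _ => by simp [cycleCount, transferSum]) (fun S _ τ x ih N hN => ?_) τ N hN
  have hcard := τ.card_restrictOffCycle_add_orbitCard x
  simp_rw [cycleCount_eq_cycleCount_restrictOffCycle_add τ x, pow_add, prod_mul_distrib,
    prod_pow_boole, if_pos (mem_range.2 (by omega : τ.orbitCard x < N + 1)), ← ih N (by omega),
    ← transferSum_restrictToCycle, mul_comm, ← transferSum_subtypeCongr,
    subtypeCongr_restrictToCycle_restrictOffCycle]

end Cycles

end Equiv.Perm

theorem zpow_sum₀ {G₀ ι : Type*} [CommGroupWithZero G₀] {a : G₀} (ha : a ≠ 0) (s : Finset ι)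
    (f : ι → ℤ) : a ^ (∑ i ∈ s, f i) = ∏ i ∈ s, a ^ f i := by
  induction s using Finset.cons_induction with
  | empty => simp
  | cons i s hi ih => rw [sum_cons, prod_cons, zpow_add₀ ha, ih]

theorem natCast_hamming {S : Type*} [Fintype S] [DecidableEq S] (f g : S → Bool) :
    (hamming f g : ℤ) = ∑ x, if f x = g x then 0 else 1 := by
  simp [hamming, natCast_card_filter, ite_not]

theorem prod_pow_typeCount {S M : Type*} [Fintype S] [DecidableEq S] [CommMonoid M]
    (w : Bool → Bool → M) (f g : S → Bool) :
    ∏ i, ∏ j, w i j ^ typeCount f g i j = ∏ x, w (f x) (g x) := by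
  rw [← prod_fiberwise' univ (fun x => (f x, g x)) fun p => w p.1 p.2, Fintype.prod_prod_type]
  simp [typeCount]

/- `c` stands for the label `h x`; the exponent is site `x`'s contribution to `2δ`. -/
noncomputable def agfKernel (w : Bool → Bool → ℝ) (z : ℝ) (a b : Bool) : ℝ :=
  ∑ c : Bool, √z ^ ((if a = c then 0 else 1 : ℤ) - if b = c then 0 else 1) * w b c

theorem AgF_eq_transferSum {S : Type*} [Fintype S] (τ : Equiv.Perm S) (w : Bool → Bool → ℝ)
    {z : ℝ} (hz : 0 < z) : AgF τ w z = τ.transferSum (agfKernel w z) := by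
  classical
  have hsqrt : √z ≠ 0 := (Real.sqrt_pos.2 hz).ne'
  refine Fintype.sum_congr _ _ fun g => ?_
  simp only [agfKernel]
  rw [prod_univ_sum, Fintype.piFinset_univ]
  refine Fintype.sum_congr _ _ fun h => ?_
  rw [natCast_hamming, natCast_hamming, ← sum_sub_distrib, zpow_sum₀ hsqrt, prod_pow_typeCount,
    ← prod_mul_distrib]
  rfl

theorem AgF_cycle_decomposition_general {S : Type*} [Fintype S] (τ : Equiv.Perm S)
    (w : Bool → Bool → ℝ) (z : ℝ) (hz : 0 < z) :
    (∑ ℓ ∈ Finset.range (Fintype.card S + 1), ℓ * cycleCount τ ℓ) = Fintype.card S ∧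
    AgF τ w z = ∏ ℓ ∈ Finset.range (Fintype.card S + 1), aGF ℓ w z ^ cycleCount τ ℓ := by
  refine ⟨τ.sum_range_mul_cycleCount le_rfl, ?_⟩
  simp_rw [aGF, AgF_eq_transferSum _ w hz]
  exact τ.transferSum_eq_prod_cycleCount _ le_rfl

/-- the cycle decomposition of the generating function `A_{S,τ}`. -/
theorem AgF_cycle_decomposition {S : Type*} [Fintype S] (τ : Equiv.Perm S)
    (w : Bool → Bool → ℝ) (hw : ∀ i j, 0 < w i j) (z : ℝ) (hz : 0 < z) :
    (∑ ℓ ∈ Finset.range (Fintype.card S + 1), ℓ * cycleCount τ ℓ) = Fintype.card S ∧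
    AgF τ w z = ∏ ℓ ∈ Finset.range (Fintype.card S + 1), aGF ℓ w z ^ cycleCount τ ℓ :=
  AgF_cycle_decomposition_general τ w z hz
end

section
/- Let g_a and g_b be graphs on the vertex set [n], and let g_a ∧ g_b denote their intersection graph, the graph whose edge indicator is the pointwise product of those of g_a and g_b. If π is a permutation of [n] that is an automorphism of g_a ∧ g_b, i.e. (g_a ∧ g_b)(l(π)(e)) = (g_a ∧ g_b)(e) for every vertex pair e, then δ(l(π); g_a, g_b) ≤ 0, i.e. Δ(g_a∘l(π), g_b) ≤ Δ(g_a, g_b). -/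
open Finset

/-
Writing `F` for the support of a labeling, `Δ(f, g) = |F| + |G| - 2 |F ∩ G|`. Composing `f` with a
permutation keeps `|F|`, and an automorphism of `f ∧ g` maps `F ∩ G` into `F`, so `F ∩ G` stays
inside the support of `(f ∘ τ) ∧ g`: the overlap can only grow, hence `Δ` can only drop.
-/

section Hamming

variable {S : Type*} [Fintype S]

lemma card_filter_comp_perm (τ : Equiv.Perm S) (f : S → Bool) :
    #{e | (f ∘ τ) e = true} = #{e | f e = true} := by
  simp only [card_filter]
  exact Equiv.sum_comp τ fun e => if f e = true then 1 else 0

variable [DecidableEq S]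

lemma hamming_add_two_mul_card_and (f g : S → Bool) :
    hamming f g + 2 * #{e | f e = true ∧ g e = true} = #{e | f e = true} + #{e | g e = true} := by
  simp only [hamming, card_filter, mul_sum, ← sum_add_distrib]
  refine sum_congr rfl fun e _ => ?_
  cases f e <;> cases g e <;> rfl

lemma hamming_comp_perm_le (τ : Equiv.Perm S) {f g : S → Bool}
    (h : ∀ e, f e = true → g e = true → f (τ e) = true) :
    hamming (f ∘ τ) g ≤ hamming f g := by
  have hsub : #{e | f e = true ∧ g e = true} ≤ #{e | (f ∘ τ) e = true ∧ g e = true} := by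
    refine card_le_card fun e he => ?_
    simp only [mem_filter, mem_univ, true_and] at he ⊢
    exact ⟨h e he.1 he.2, he.2⟩
  have := hamming_add_two_mul_card_and (f ∘ τ) g
  have := hamming_add_two_mul_card_and f g
  have := card_filter_comp_perm τ f
  omega

lemma deltaQ_nonpos_iff (τ : Equiv.Perm S) (f g : S → Bool) :
    deltaQ τ f g ≤ 0 ↔ hamming (f ∘ τ) g ≤ hamming f g := by
  rw [deltaQ, div_le_iff₀ two_pos, zero_mul, sub_nonpos, Nat.cast_le]

end Hamming

/-- automorphisms of the intersection graph have `δ ≤ 0` (Lemma 14). -/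
theorem aut_intersection_delta_nonpos
    (n : ℕ) (ga gb : PairGraph n) (π : Equiv.Perm (Fin n))
    (hAut : ∀ e : VPairs n,
      (ga (pairPerm π e) && gb (pairPerm π e)) = (ga e && gb e)) :
    deltaQ (pairPerm π) ga gb ≤ 0 ∧
    hamming (ga ∘ (pairPerm π)) gb ≤ hamming ga gb := by
  have hle : hamming (ga ∘ pairPerm π) gb ≤ hamming ga gb := by
    refine hamming_comp_perm_le _ fun e ha hb => ?_
    have := hAut e
    rw [ha, hb, Bool.and_true, Bool.and_eq_true] at this
    exact this.1
  exact ⟨(deltaQ_nonpos_iff _ _ _).mpr hle, hle⟩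
end
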